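/- arXiv:1807.05197 — 4 statements merged into one kernel-verified Lean document; each statement's English description precedes it below -/
import Mathlib

section
/- Let a_1, a_2, a_3, a_4 and x, z, η be complex numbers such that all denominators below are nonzero. Then Σ_{ε=±1} ε · (∏_{ℓ=1}^{4} sinh(x+ε a_ℓ)) / ( sinh(2x) · (ς(x+ε η/2) − ς(z)) ) = Σ_{ε=±1} ε · (∏_{ℓ=1}^{4} sinh(z+ε η/2 − ε a_ℓ)) / ( sinh(2z) · (ς(z+ε η/2) − ς(x)) ) + sinh(a_1+a_2+a_3+a_4 − η). -/
open Complex

noncomputable def ς (z : ℂ) : ℂ := Complex.cosh (2 * z) / 2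

/-!
Since `ς p - ς q = sinh (p + q) * sinh (p - q)`, the four terms of the identity are
`± ∏ₗ sinh (cᵢ + aₗ) / ∏_{j ≠ i} sinh (cᵢ - cⱼ)` for the nodes `c = (x, -x, z - η/2, -(z + η/2))`,
i.e. the residues of `w ↦ ∏ₗ sinh (w + aₗ) / ∏ⱼ sinh (w - cⱼ)`. In the variable `t = e^{2w}`
the sum of these residues is a Lagrange interpolation formula: the leading coefficient `e^{Σ a}`
of the quartic `∏ₗ (e^{aₗ} t - e^{-aₗ})` is the sum of its divided-difference terms at the nodes
`0` and `e^{2cᵢ}`. The node `0` contributes `e^{-Σ a - 2Σ c}`, and what is left is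
`2 e^{-Σ c} sinh (Σ a + Σ c)`, with `Σ c = -η`.
-/

open Finset

section Lagrange

variable {ι : Type*} [Fintype ι] [DecidableEq ι]

lemma univ_erase_none : (univ : Finset (Option ι)).erase none = univ.map .some := by
  ext (_ | _) <;> simp

lemma univ_erase_some (i : ι) :
    (univ : Finset (Option ι)).erase (some i) = insertNone (univ.erase i) := by
  ext (_ | _) <;> simp

open Polynomial in
/-- The leading coefficient of `∏ₗ (αₗ X - βₗ)`, computed by Lagrange interpolation at the nodes
`0` and `Tᵢ`. -/
theorem prod_eq_lagrange_sum_prod_mul_sub {F : Type*} [Field F] (α β T : ι → F)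
    (hT₀ : ∀ i, T i ≠ 0) (hT : Function.Injective T) :
    ∏ l, α l = (∏ l, -β l) / ∏ i, -T i +
      ∑ i, (∏ l, (α l * T i - β l)) / (T i * ∏ j ∈ univ.erase i, (T i - T j)) := by
  let v : Option ι → F := fun k => k.elim 0 T
  have hv : Set.InjOn v (univ : Finset (Option ι)) := by
    rintro (_ | i) - (_ | j) - h
    · rfl
    · exact absurd h.symm (hT₀ j)
    · exact absurd h (hT₀ i)
    · exact congrArg some (hT h)
  have hlinear (l : ι) : (C (α l) * X - C (β l)).natDegree ≤ 1 := by compute_degree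
  have hnatDegree : (∏ l, (C (α l) * X - C (β l))).natDegree ≤ Fintype.card ι :=
    (natDegree_prod_le _ _).trans ((sum_le_card_nsmul univ _ 1 fun l _ => hlinear l).trans
      (by simp))
  have hcoeff : (∏ l, (C (α l) * X - C (β l))).coeff (Fintype.card ι) = ∏ l, α l := by
    simpa using coeff_prod_of_natDegree_le univ _ 1 fun l _ => hlinear l
  have hinterp := Lagrange.coeff_eq_sum hv <| (degree_le_of_natDegree_le hnatDegree).trans_lt <| by
    rw [card_univ, Fintype.card_option]; exact_mod_cast Nat.lt_succ_self _
  simp only [card_univ, Fintype.card_option, add_tsub_cancel_right, hcoeff,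
    Fintype.sum_option, univ_erase_none, univ_erase_some, prod_map, prod_insertNone] at hinterp
  simpa [v, eval_prod, sub_eq_add_neg] using hinterp

end Lagrange

lemma two_mul_exp_mul_sinh_add (c a : ℂ) :
    2 * exp c * sinh (c + a) = exp a * exp (2 * c) - exp (-a) := by
  rw [Complex.sinh]
  simp only [exp_add, exp_neg, two_mul]
  field_simp
  ring

lemma two_mul_exp_add_mul_sinh_sub (u v : ℂ) :
    2 * exp (u + v) * sinh (u - v) = exp (2 * u) - exp (2 * v) := by
  rw [Complex.sinh]
  simp only [exp_add, exp_sub, exp_neg, two_mul]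
  field_simp
  ring

lemma sinh_neg_add (u v : ℂ) : sinh (-u + v) = -sinh (u - v) := by
  rw [← sinh_neg, neg_sub, neg_add_eq_sub]

lemma sinh_neg_sub (u v : ℂ) : sinh (-u - v) = -sinh (u + v) := by
  rw [← sinh_neg, neg_add']

lemma ς_sub_ς (p q : ℂ) : ς p - ς q = sinh (p + q) * sinh (p - q) := by
  rw [ς, ς, show 2 * p = (p + q) + (p - q) by ring, show 2 * q = (p + q) - (p - q) by ring,
    cosh_add (p + q) (p - q), cosh_sub (p + q) (p - q)]
  ring

section SinhInterpolation

variable {ι : Type*} [Fintype ι] [DecidableEq ι]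

lemma prod_sinh_add_div_prod_sinh_sub_eq (a c : ι → ℂ) (i : ι) :
    (∏ l, sinh (c i + a l)) / ∏ j ∈ univ.erase i, sinh (c i - c j) =
      exp (∑ j, c j) / 2 * ((∏ l, (exp (a l) * exp (2 * c i) - exp (-a l))) /
        (exp (2 * c i) * ∏ j ∈ univ.erase i, (exp (2 * c i) - exp (2 * c j)))) := by
  set K := (2 * exp (c i)) ^ Fintype.card ι
  have hnum : ∏ l, (exp (a l) * exp (2 * c i) - exp (-a l)) = K * ∏ l, sinh (c i + a l) := by
    simp_rw [← two_mul_exp_mul_sinh_add, prod_mul_distrib, prod_const, card_univ, K, mul_pow]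
  have hweights : 2 * exp (2 * c i) * ∏ j ∈ univ.erase i, 2 * exp (c i + c j) =
      K * exp (∑ j, c j) := by
    rw [two_mul (c i), mul_prod_erase univ (fun j => 2 * exp (c i + c j)) (mem_univ i)]
    simp_rw [exp_add, ← mul_assoc, prod_mul_distrib, prod_const, card_univ, exp_sum, K, mul_pow]
  have hden : exp (2 * c i) * ∏ j ∈ univ.erase i, (exp (2 * c i) - exp (2 * c j)) =
      K * exp (∑ j, c j) / 2 * ∏ j ∈ univ.erase i, sinh (c i - c j) := by
    rw [← hweights]
    simp_rw [← two_mul_exp_add_mul_sinh_sub, prod_mul_distrib]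
    ring
  have hK : K ≠ 0 := pow_ne_zero _ (mul_ne_zero two_ne_zero (exp_ne_zero _))
  rw [hnum, hden]
  field_simp [exp_ne_zero]

theorem sum_prod_sinh_add_div_prod_sinh_sub (a c : ι → ℂ)
    (hc : ∀ i, ∏ j ∈ univ.erase i, sinh (c i - c j) ≠ 0) :
    ∑ i, (∏ l, sinh (c i + a l)) / ∏ j ∈ univ.erase i, sinh (c i - c j) =
      sinh (∑ l, a l + ∑ i, c i) := by
  have hT : Function.Injective fun i => exp (2 * c i) := by
    intro i j hij
    by_contra hne
    apply prod_ne_zero_iff.mp (hc i) j (mem_erase.mpr ⟨Ne.symm hne, mem_univ j⟩)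
    simpa [← two_mul_exp_add_mul_sinh_sub, sub_eq_zero.mpr hij, exp_ne_zero] using
      two_mul_exp_add_mul_sinh_sub (c i) (c j)
  have key := prod_eq_lagrange_sum_prod_mul_sub (fun l => exp (a l)) (fun l => exp (-a l))
    (fun i => exp (2 * c i)) (fun _ => exp_ne_zero _) hT
  simp_rw [prod_sinh_add_div_prod_sinh_sub_eq, ← mul_sum, eq_sub_of_add_eq' key.symm]
  simp only [prod_neg, ← exp_sum, sum_neg_distrib, ← mul_sum, card_univ]
  rw [Complex.sinh, neg_add, exp_add, exp_add, exp_neg, exp_neg, two_mul, exp_add]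
  field_simp

end SinhInterpolation

theorem sum_prod_sinh_add_div_prod_sinh_sub_four (a : Fin 4 → ℂ) (c₀ c₁ c₂ c₃ : ℂ)
    (h₀ : sinh (c₀ - c₁) * (sinh (c₀ - c₂) * sinh (c₀ - c₃)) ≠ 0)
    (h₁ : sinh (c₁ - c₀) * (sinh (c₁ - c₂) * sinh (c₁ - c₃)) ≠ 0)
    (h₂ : sinh (c₂ - c₀) * (sinh (c₂ - c₁) * sinh (c₂ - c₃)) ≠ 0)
    (h₃ : sinh (c₃ - c₀) * (sinh (c₃ - c₁) * sinh (c₃ - c₂)) ≠ 0) :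
    (∏ l, sinh (c₀ + a l)) / (sinh (c₀ - c₁) * (sinh (c₀ - c₂) * sinh (c₀ - c₃))) +
      (∏ l, sinh (c₁ + a l)) / (sinh (c₁ - c₀) * (sinh (c₁ - c₂) * sinh (c₁ - c₃))) +
      (∏ l, sinh (c₂ + a l)) / (sinh (c₂ - c₀) * (sinh (c₂ - c₁) * sinh (c₂ - c₃))) +
      (∏ l, sinh (c₃ + a l)) / (sinh (c₃ - c₀) * (sinh (c₃ - c₁) * sinh (c₃ - c₂))) =
      sinh (∑ l, a l + (c₀ + c₁ + c₂ + c₃)) := by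
  have erase₀ : univ.erase (0 : Fin 4) = {1, 2, 3} := by decide
  have erase₁ : univ.erase (1 : Fin 4) = {0, 2, 3} := by decide
  have erase₂ : univ.erase (2 : Fin 4) = {0, 1, 3} := by decide
  have erase₃ : univ.erase (3 : Fin 4) = {0, 1, 2} := by decide
  have hsum := sum_prod_sinh_add_div_prod_sinh_sub a ![c₀, c₁, c₂, c₃] (by
    intro i
    fin_cases i <;> simpa (disch := decide) only [Fin.zero_eta, Fin.mk_one, Fin.reduceFinMk,
      erase₀, erase₁, erase₂, erase₃, prod_insert, prod_singleton, Matrix.cons_val])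
  simpa (disch := decide) only [Fin.sum_univ_four, erase₀, erase₁, erase₂, erase₃, prod_insert,
    prod_singleton, Matrix.cons_val] using hsum

/-- The `n_a = 4` variable-exchange identity, with the extra constant term
`sinh(a₁+a₂+a₃+a₄ − η)`. -/
theorem exchange_identity_four (a₁ a₂ a₃ a₄ x z η : ℂ)
    (hx : Complex.sinh (2 * x) ≠ 0) (hz : Complex.sinh (2 * z) ≠ 0)
    (hxp : ς (x + η / 2) - ς z ≠ 0) (hxm : ς (x - η / 2) - ς z ≠ 0)
    (hzp : ς (z + η / 2) - ς x ≠ 0) (hzm : ς (z - η / 2) - ς x ≠ 0) :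
    Complex.sinh (x + a₁) * Complex.sinh (x + a₂) * Complex.sinh (x + a₃) *
        Complex.sinh (x + a₄) /
        (Complex.sinh (2 * x) * (ς (x + η / 2) - ς z)) -
      Complex.sinh (x - a₁) * Complex.sinh (x - a₂) * Complex.sinh (x - a₃) *
        Complex.sinh (x - a₄) /
        (Complex.sinh (2 * x) * (ς (x - η / 2) - ς z)) =
    Complex.sinh (z + η / 2 - a₁) * Complex.sinh (z + η / 2 - a₂) *
        Complex.sinh (z + η / 2 - a₃) * Complex.sinh (z + η / 2 - a₄) /
        (Complex.sinh (2 * z) * (ς (z + η / 2) - ς x)) -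
      Complex.sinh (z - η / 2 + a₁) * Complex.sinh (z - η / 2 + a₂) *
        Complex.sinh (z - η / 2 + a₃) * Complex.sinh (z - η / 2 + a₄) /
        (Complex.sinh (2 * z) * (ς (z - η / 2) - ς x)) +
      Complex.sinh (a₁ + a₂ + a₃ + a₄ - η) := by
  have hD₀ : sinh (x - -x) * (sinh (x - (z - η / 2)) * sinh (x - -(z + η / 2))) =
      sinh (2 * x) * (ς (x + η / 2) - ς z) := by
    rw [ς_sub_ς]; ring_nf
  have hD₁ : sinh (-x - x) * (sinh (-x - (z - η / 2)) * sinh (-x - -(z + η / 2))) =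
      -(sinh (2 * x) * (ς (x - η / 2) - ς z)) := by
    rw [ς_sub_ς]; simp only [sinh_neg_sub]; ring_nf
  have hD₂ : sinh (z - η / 2 - x) * (sinh (z - η / 2 - -x) * sinh (z - η / 2 - -(z + η / 2))) =
      sinh (2 * z) * (ς (z - η / 2) - ς x) := by
    rw [ς_sub_ς]; ring_nf
  have hD₃ : sinh (-(z + η / 2) - x) *
      (sinh (-(z + η / 2) - -x) * sinh (-(z + η / 2) - (z - η / 2))) =
      -(sinh (2 * z) * (ς (z + η / 2) - ς x)) := by
    rw [ς_sub_ς]; simp only [sinh_neg_sub]; ring_nf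
  have key := sum_prod_sinh_add_div_prod_sinh_sub_four ![a₁, a₂, a₃, a₄]
    x (-x) (z - η / 2) (-(z + η / 2))
    (by rw [hD₀]; exact mul_ne_zero hx hxp) (by rw [hD₁, neg_ne_zero]; exact mul_ne_zero hx hxm)
    (by rw [hD₂]; exact mul_ne_zero hz hzm) (by rw [hD₃, neg_ne_zero]; exact mul_ne_zero hz hzp)
  have hsum : ∑ l, ![a₁, a₂, a₃, a₄] l + (x + -x + (z - η / 2) + -(z + η / 2)) =
      a₁ + a₂ + a₃ + a₄ - η := by
    simp only [Fin.sum_univ_four, Matrix.cons_val]; ring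
  rw [hD₀, hD₁, hD₂, hD₃, hsum] at key
  simp only [Fin.prod_univ_four, Matrix.cons_val, sinh_neg_add, neg_mul, div_neg] at key
  linear_combination key
end

section
/- For complex η, β, λ, μ with sinh(ηβ) ≠ 0, the 4×4 matrices S_1(λ|β) S_2(μ|β+σ^z_1-shift) and the dynamical R-matrix satisfy the Vertex-IRF relation R_{12}(λ−μ) · S_1(λ|β) · S_2(μ|β+σ^z_1) = S_2(μ|β) · S_1(λ|β+σ^z_2) · R^{SOS}_{12}(λ−μ|β), where R_{12}(λ) is the 6-vertex matrix diag-block matrix with entries [[sinh(λ+η),0,0,0],[0,sinh λ, sinh η,0],[0,sinh η, sinh λ,0],[0,0,0,sinh(λ+η)]], S(λ|β) is the 2×2 matrix [[e^{λ−η(β+α)}, e^{λ+η(β−α)}],[1,1]] for an arbitrary shift parameter α, R^{SOS}(λ|β) is the matrix [[sinh(λ+η),0,0,0],[0, sinh(η(β+1)) sinh λ/sinh(ηβ), sinh(λ+ηβ) sinh η/sinh(ηβ),0],[0, sinh(ηβ−λ) sinh η/sinh(ηβ), sinh(η(β−1)) sinh λ/sinh(ηβ),0],[0,0,0,sinh(λ+η)]],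 and where S_1(λ|β+σ^z_2) means the operator acting on C^2⊗C^2 whose restriction to the subspace where the second factor has σ^z-eigenvalue s ∈ {+1,−1} is S(λ|β+s) ⊗ id appropriately placed (similarly for S_2(μ|β+σ^z_1)). -/
open Complex

/-- The 6-vertex trigonometric R-matrix on `ℂ² ⊗ ℂ²`. -/
noncomputable def R6v (η l : ℂ) : Matrix (Fin 2 × Fin 2) (Fin 2 × Fin 2) ℂ :=
  Matrix.of fun p q =>
    if p = q then (if p.1 = p.2 then Complex.sinh (l + η) else Complex.sinh l)
    else if p.1 = q.2 ∧ p.2 = q.1 then Complex.sinh η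
    else 0

/-- The trigonometric dynamical (SOS) R-matrix `R^{SOS}(λ|β)`. -/
noncomputable def RSOS (η β l : ℂ) : Matrix (Fin 2 × Fin 2) (Fin 2 × Fin 2) ℂ :=
  Matrix.of fun p q =>
    if p = q then
      (if p.1 = p.2 then Complex.sinh (l + η)
       else if p.1 = 0 then
         Complex.sinh (η * (β + 1)) * Complex.sinh l / Complex.sinh (η * β)
       else Complex.sinh (η * (β - 1)) * Complex.sinh l / Complex.sinh (η * β))
    else if p.1 = q.2 ∧ p.2 = q.1 ∧ p.1 ≠ p.2 then
      (if p.1 = 0 then Complex.sinh (l + η * β) * Complex.sinh η / Complex.sinh (η * β)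
       else Complex.sinh (η * β - l) * Complex.sinh η / Complex.sinh (η * β))
    else 0

/-- The local Vertex-IRF gauge matrix `S(λ|β)` (with shift parameter `α`). -/
noncomputable def Sgauge (α η β l : ℂ) : Matrix (Fin 2) (Fin 2) ℂ :=
  !![Complex.exp (l - η * (β + α)), Complex.exp (l + η * (β - α)); 1, 1]

/-- σᶻ-eigenvalue of the basis vector indexed by `j : Fin 2`. -/
def σz (j : Fin 2) : ℂ := if j = 0 then 1 else -1

/-- `S₁(λ|β) = S(λ|β) ⊗ id`. -/
noncomputable def S1 (α η β l : ℂ) : Matrix (Fin 2 × Fin 2) (Fin 2 × Fin 2) ℂ :=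
  Matrix.of fun p q => if p.2 = q.2 then Sgauge α η β l p.1 q.1 else 0

/-- `S₁(λ|β+σᶻ₂)`: on the σᶻ-eigenspace of the second factor with eigenvalue `s`,
acts as `S(λ|β+s) ⊗ id`. -/
noncomputable def S1dyn (α η β l : ℂ) : Matrix (Fin 2 × Fin 2) (Fin 2 × Fin 2) ℂ :=
  Matrix.of fun p q => if p.2 = q.2 then Sgauge α η (β + σz p.2) l p.1 q.1 else 0

/-- `S₂(μ|β) = id ⊗ S(μ|β)`. -/
noncomputable def S2 (α η β l : ℂ) : Matrix (Fin 2 × Fin 2) (Fin 2 × Fin 2) ℂ :=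
  Matrix.of fun p q => if p.1 = q.1 then Sgauge α η β l p.2 q.2 else 0

/-- `S₂(μ|β+σᶻ₁)`. -/
noncomputable def S2dyn (α η β l : ℂ) : Matrix (Fin 2 × Fin 2) (Fin 2 × Fin 2) ℂ :=
  Matrix.of fun p q => if p.1 = q.1 then Sgauge α η (β + σz p.1) l p.2 q.2 else 0

/-!
Column `(k, l)` of `S₁(λ|β) S₂(μ|β+σᶻ₁)` is the tensor product of the `k`-th column of `S(λ|β)`
with the `l`-th column of `S(μ|β+σ_k)`, and column `(k, l)` of `S₂(μ|β) S₁(λ|β+σᶻ₂)` is the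
tensor product of the `k`-th column of `S(λ|β+σ_l)` with the `l`-th column of `S(μ|β)`.
Multiplying out against the two R-matrices and writing `sinh` through `exp`, every entry of the
relation becomes a rational identity in `e^λ, e^μ, e^η, e^{ηβ}, e^{ηα}` whose only non-trivial
denominator is `e^{2ηβ} - 1`, which is nonzero exactly because `sinh (ηβ) ≠ 0`.
-/

theorem Complex.exp_sq_sub_one_ne_zero_of_sinh_ne_zero {z : ℂ} (h : sinh z ≠ 0) :
    exp z ^ 2 - 1 ≠ 0 := by
  contrapose! h
  rw [sinh, exp_neg]
  field_simp
  linear_combination h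

theorem S1_mul_S2dyn_apply (α η β l₁ l₂ : ℂ) (p : Fin 2 × Fin 2) (k l : Fin 2) :
    (S1 α η β l₁ * S2dyn α η β l₂) p (k, l) =
      Sgauge α η β l₁ p.1 k * Sgauge α η (β + σz k) l₂ p.2 l := by
  simp [Matrix.mul_apply, Fintype.sum_prod_type, S1, S2dyn]

theorem S2_mul_S1dyn_apply (α η β l₁ l₂ : ℂ) (p : Fin 2 × Fin 2) (k l : Fin 2) :
    (S2 α η β l₂ * S1dyn α η β l₁) p (k, l) =
      Sgauge α η (β + σz l) l₁ p.1 k * Sgauge α η β l₂ p.2 l := by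
  simp [Matrix.mul_apply, Fintype.sum_prod_type, S2, S1dyn, mul_comm]

/-- The Vertex-IRF transformation:
`R₁₂(λ−μ) S₁(λ|β) S₂(μ|β+σᶻ₁) = S₂(μ|β) S₁(λ|β+σᶻ₂) R^{SOS}₁₂(λ−μ|β)`. -/
theorem vertex_IRF (η β α lam mu : ℂ) (hβ : Complex.sinh (η * β) ≠ 0) :
    R6v η (lam - mu) * S1 α η β lam * S2dyn α η β mu =
      S2 α η β mu * S1dyn α η β lam * RSOS η β (lam - mu) := by
  have hb := exp_sq_sub_one_ne_zero_of_sinh_ne_zero hβ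
  ext ⟨i, j⟩ ⟨k, l⟩
  rw [Matrix.mul_assoc, Matrix.mul_apply, Matrix.mul_apply]
  simp only [S1_mul_S2dyn_apply, S2_mul_S1dyn_apply, Fintype.sum_prod_type, Fin.sum_univ_two]
  fin_cases i, j, k, l <;>
    simp only [R6v, RSOS, Sgauge, σz, Matrix.of_apply, Matrix.cons_val_zero, Matrix.cons_val_one,
      Fin.zero_eta, Fin.mk_one, Prod.mk.injEq, zero_ne_one, one_ne_zero, and_false, and_true, ne_eq,
      not_true_eq_false, not_false_eq_true, ↓reduceIte] <;>
    simp only [sinh, exp_neg, mul_add, mul_sub, mul_neg, exp_add, exp_sub] <;>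
    field_simp <;> ring
end

section
/- With the notation of the previous statement (ξ_n^{(h)} = ξ_n + η/2 − hη, V̂(x_1,...,x_N) = ∏_{j<k}(sinh^2 x_k − sinh^2 x_j), u_n = −∏_{j≠n} sinh(ξ_n−ξ_j+η) sinh(ξ_n+ξ_j+η)/( sinh(ξ_n+ξ_j−η) sinh(ξ_n−ξ_j−η) )), for every tuple (h_1,...,h_N) ∈ {0,1}^N one has ∏_{n=1}^N (−u_n)^{h_n} · V̂(ξ_1^{(h_1)},...,ξ_N^{(h_N)}) = [ V̂(ξ_1^{(0)},...,ξ_N^{(0)}) / V̂(ξ_1^{(1)},...,ξ_N^{(1)}) ] · V̂(ξ_1^{(1−h_1)},...,ξ_N^{(1−h_N)}), assuming all the Vandermonde determinants involved are nonzero. -/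
open Complex Finset

/-- The modified Vandermonde `V̂(x₁,…,x_N) = ∏_{j<k} (sinh² x_k − sinh² x_j)`. -/
noncomputable def Vhat {N : ℕ} (x : Fin N → ℂ) : ℂ :=
  ∏ p ∈ Finset.univ.filter (fun p : Fin N × Fin N => p.1 < p.2),
    (Complex.sinh (x p.2) ^ 2 - Complex.sinh (x p.1) ^ 2)

/-- The dressing factor `u_n` of the left separate states. -/
noncomputable def udress {N : ℕ} (ξ : Fin N → ℂ) (η : ℂ) (n : Fin N) : ℂ :=
  -∏ j ∈ Finset.univ.erase n,
      (Complex.sinh (ξ n - ξ j + η) * Complex.sinh (ξ n + ξ j + η) /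
        (Complex.sinh (ξ n + ξ j - η) * Complex.sinh (ξ n - ξ j - η)))

/-!
Both `∏ₙ (−uₙ)^{hₙ}` and the Vandermonde `V̂` factor over unordered pairs `{j, k}`, so the identity
reduces to one identity per pair, which depends only on `(h_j, h_k) ∈ {0,1}²`. Writing
`s = ξ_j + ξ_k` and `d = ξ_k − ξ_j`, the pair factor of `V̂(ξ^{(h)})` is
`sinh(s + η − (h_j + h_k)η) · sinh(d + (h_j − h_k)η)` because `sinh² x − sinh² y = sinh(x+y) sinh(x−y)`,
and each of the four cases is then a cancellation of `sinh(s ± η)`, `sinh(d ± η)` factors.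
-/

theorem Complex.sinh_sq_sub_sinh_sq (x y : ℂ) :
    sinh x ^ 2 - sinh y ^ 2 = sinh (x + y) * sinh (x - y) := by
  rw [sinh_add, sinh_sub]
  linear_combination sinh y ^ 2 * cosh_sq x - sinh x ^ 2 * cosh_sq y

theorem Finset.prod_prod_erase_eq_prod_filter_lt {ι M : Type*} [Fintype ι] [LinearOrder ι]
    [CommMonoid M] (F : ι → ι → M) :
    ∏ i, ∏ j ∈ univ.erase i, F i j =
      ∏ p ∈ univ.filter (fun p : ι × ι => p.1 < p.2), F p.1 p.2 * F p.2 p.1 := by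
  have h_offDiag : ∏ i, ∏ j ∈ univ.erase i, F i j =
      ∏ p ∈ univ.filter (fun p : ι × ι => p.1 ≠ p.2), F p.1 p.2 := by
    rw [prod_filter, ← univ_product_univ, prod_product]
    refine prod_congr rfl fun i _ => ?_
    rw [← prod_filter, filter_ne]
  rw [h_offDiag, ← filter_union_filter_not_eq (fun p : ι × ι => p.1 < p.2)
      (univ.filter fun p : ι × ι => p.1 ≠ p.2),
    prod_union (disjoint_filter_filter_not _ _ _), prod_mul_distrib]
  congr 1
  · congr 1
    ext p
    simpa using ne_of_lt
  · apply prod_nbij' Prod.swap Prod.swap <;> grind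

noncomputable def dressRatio (η a b : ℂ) : ℂ :=
  sinh (a - b + η) * sinh (a + b + η) / (sinh (a + b - η) * sinh (a - b - η))

theorem dressRatio_eq (η a b : ℂ) :
    dressRatio η a b = sinh (b - a - η) * sinh (a + b + η) / (sinh (a + b - η) * sinh (b - a + η)) := by
  rw [dressRatio, show a - b + η = -(b - a - η) by ring, show a - b - η = -(b - a + η) by ring,
    sinh_neg, sinh_neg, neg_mul, mul_neg, neg_div_neg_eq]

theorem dressRatio_swap (η a b : ℂ) :
    dressRatio η b a = sinh (b - a + η) * sinh (a + b + η) / (sinh (a + b - η) * sinh (b - a - η)) := by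
  rw [dressRatio, add_comm b a]

theorem prod_neg_udress_pow {N : ℕ} (ξ : Fin N → ℂ) (η : ℂ) (h : Fin N → ℕ) :
    ∏ n, (-udress ξ η n) ^ h n =
      ∏ p ∈ univ.filter (fun p : Fin N × Fin N => p.1 < p.2),
        dressRatio η (ξ p.1) (ξ p.2) ^ h p.1 * dressRatio η (ξ p.2) (ξ p.1) ^ h p.2 := by
  simp only [udress, neg_neg, ← prod_pow]
  exact prod_prod_erase_eq_prod_filter_lt fun n j => dressRatio η (ξ n) (ξ j) ^ h n

theorem dressRatio_pow_mul_sinh_sq_sub_flip (a b η : ℂ) {i j : ℕ} (hi : i ≤ 1) (hj : j ≤ 1)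
    (h_add : sinh (a + b - η) ≠ 0) (h_sub : sinh (a - b - η) ≠ 0) (h_sub' : sinh (b - a - η) ≠ 0) :
    dressRatio η a b ^ i * dressRatio η b a ^ j *
        (sinh (b + η / 2 - (j : ℂ) * η) ^ 2 - sinh (a + η / 2 - (i : ℂ) * η) ^ 2) *
        (sinh (b + η / 2 - η) ^ 2 - sinh (a + η / 2 - η) ^ 2) =
      (sinh (b + η / 2) ^ 2 - sinh (a + η / 2) ^ 2) *
        (sinh (b + η / 2 - ((1 - j : ℕ) : ℂ) * η) ^ 2 -
          sinh (a + η / 2 - ((1 - i : ℕ) : ℂ) * η) ^ 2) := by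
  have h_sub_neg : sinh (b - a + η) ≠ 0 := by
    rwa [show b - a + η = -(a - b - η) by ring, sinh_neg, neg_ne_zero]
  rw [dressRatio_eq, dressRatio_swap]
  interval_cases i <;> interval_cases j <;>
    simp only [sinh_sq_sub_sinh_sq, Nat.cast_zero, Nat.cast_one, Nat.sub_zero, Nat.sub_self] <;>
    field_simp <;> ring_nf

theorem flip_identity_general (N : ℕ) (ξ : Fin N → ℂ) (η : ℂ) (h : Fin N → ℕ)
    (hh : ∀ n, h n ≤ 1)
    (hden : ∀ n j, j ≠ n →
      Complex.sinh (ξ n + ξ j - η) ≠ 0 ∧ Complex.sinh (ξ n - ξ j - η) ≠ 0)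
    (hV1 : Vhat (fun n => ξ n + η / 2 - η) ≠ 0) :
    (∏ n, (-udress ξ η n) ^ h n) * Vhat (fun n => ξ n + η / 2 - (h n : ℂ) * η) =
      Vhat (fun n => ξ n + η / 2) / Vhat (fun n => ξ n + η / 2 - η) *
        Vhat (fun n => ξ n + η / 2 - ((1 - h n : ℕ) : ℂ) * η) := by
  rw [div_mul_eq_mul_div, eq_div_iff hV1]
  simp only [Vhat, prod_neg_udress_pow, ← prod_mul_distrib]
  refine prod_congr rfl fun p hp => ?_
  have hne : p.2 ≠ p.1 := (mem_filter.mp hp).2.ne'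
  exact dressRatio_pow_mul_sinh_sq_sub_flip _ _ η (hh p.1) (hh p.2)
    (hden _ _ hne).1 (hden _ _ hne).2 (hden _ _ hne.symm).2

/-- For every `(h₁,…,h_N) ∈ {0,1}^N`, with `ξ_n^{(h)} = ξ_n + η/2 − hη`,
`∏ (−u_n)^{h_n} · V̂(ξ^{(h)}) = [V̂(ξ^{(0)})/V̂(ξ^{(1)})] · V̂(ξ^{(1−h)})`. -/
theorem flip_identity (N : ℕ) (ξ : Fin N → ℂ) (η : ℂ) (h : Fin N → ℕ)
    (hh : ∀ n, h n ≤ 1)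
    (hden : ∀ n j, j ≠ n →
      Complex.sinh (ξ n + ξ j - η) ≠ 0 ∧ Complex.sinh (ξ n - ξ j - η) ≠ 0)
    (hV0 : Vhat (fun n => ξ n + η / 2) ≠ 0)
    (hV1 : Vhat (fun n => ξ n + η / 2 - η) ≠ 0)
    (hVh : Vhat (fun n => ξ n + η / 2 - (h n : ℂ) * η) ≠ 0)
    (hVh' : Vhat (fun n => ξ n + η / 2 - ((1 - h n : ℕ) : ℂ) * η) ≠ 0) :
    (∏ n, (-udress ξ η n) ^ h n) * Vhat (fun n => ξ n + η / 2 - (h n : ℂ) * η) =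
      Vhat (fun n => ξ n + η / 2) / Vhat (fun n => ξ n + η / 2 - η) *
        Vhat (fun n => ξ n + η / 2 - ((1 - h n : ℕ) : ℂ) * η) :=
  flip_identity_general N ξ η h hh hden hV1
end

section
/- Let x_1,...,x_L, η be complex, with ς(z) = cosh(2z)/2, and define polynomials (in ς) X^{(±)}(λ) = ∏_{ℓ=1}^L (ς(λ) − ς(x_ℓ ± η/2)) and X_k^{(±)}(λ) = ∏_{ℓ≠k} (ς(λ) − ς(x_ℓ ± η/2)). Define the 2L×2L matrix D̃ by: for 1 ≤ k ≤ L, X_k^{(+)}(λ) X_k^{(−)}(λ) = Σ_{j=1}^{2L} D̃_{j,k} ς(λ)^{j−1}, and for L+1 ≤ k ≤ 2L, X^{(+)}(λ) X_{k−L}^{(−)}(λ) = Σ_{j=1}^{2L} D̃_{j,k} ς(λ)^{j−1}. Then det D̃ = V̂(x_L+η/2,...,x_1+η/2) · V̂(x_L−η/2,...,x_1−η/2) · ∏_{k=1}^L X_k^{(−)}(x_k+η/2), where V̂(y_1,...,y_L) = ∏_{j<k}(sinh^2 y_k − sinh^2 y_j) with ordering as indicated. -/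
open Complex Finset

/-!
Put `a = ς(x + η/2)` and `b = ς(x - η/2)`. Since `ς : ℂ → ℂ` is onto, the defining identities
say that the columns of `D̃` are the coefficient vectors of polynomials of degree `< 2L`.
Multiplying by the Vandermonde matrix of the `2L` nodes `(a, b)` replaces coefficients by values,
and at these nodes the polynomials give a lower triangular matrix whose diagonal is
`X_k⁽⁺⁾ X_k⁽⁻⁾ (a_k)` and `X⁽⁺⁾ X_k⁽⁻⁾ (b_k)`. Dividing by the Vandermonde determinant leaves the
claimed product; the division is justified for indeterminate nodes over `ℤ`, and the identity
then specialises to arbitrary nodes. Finally `ς z - ς w = sinh² z - sinh² w`.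
-/

open Polynomial

section CoeffMatrix

variable {R : Type*} [CommRing R] {n : ℕ}

def coeffMatrix (p : Fin n → R[X]) : Matrix (Fin n) (Fin n) R :=
  Matrix.of fun i j => (p j).coeff i

theorem vandermonde_mul_coeffMatrix (v : Fin n → R) (p : Fin n → R[X])
    (hp : ∀ j, (p j).natDegree < n) :
    Matrix.vandermonde v * coeffMatrix p = Matrix.of fun i j => (p j).eval (v i) := by
  ext i j
  rw [Matrix.of_apply, eval_eq_sum_range' (hp j), ← Fin.sum_univ_eq_sum_range, Matrix.mul_apply]
  simp only [Matrix.vandermonde_apply, coeffMatrix, Matrix.of_apply, mul_comm]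

theorem coeffMatrix_map {S : Type*} [CommRing S] (φ : R →+* S) (p : Fin n → R[X]) :
    (coeffMatrix p).map φ = coeffMatrix fun j => (p j).map φ := by
  ext i j
  simp [coeffMatrix]

theorem eq_coeffMatrix_of_forall_eval [IsDomain R] [Infinite R] {D : Matrix (Fin n) (Fin n) R}
    {p : Fin n → R[X]} (h : ∀ j r, (p j).eval r = ∑ i, D i j * r ^ (i : ℕ)) :
    D = coeffMatrix p := by
  ext i j
  have hp : p j = ∑ i, C (D i j) * X ^ (i : ℕ) :=
    Polynomial.funext fun r => by simp [h j r, eval_finsetSum]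
  simp [coeffMatrix, hp, coeff_X_pow, Fin.val_inj]

end CoeffMatrix

section PairProducts

variable {ι M : Type*} [CommMonoid M] [Fintype ι] [LinearOrder ι] [LocallyFiniteOrderTop ι]

theorem prod_filter_lt_eq_prod_Ioi (f : ι → ι → M) :
    ∏ p ∈ univ.filter (fun p : ι × ι => p.1 < p.2), f p.1 p.2 = ∏ i, ∏ j ∈ Ioi i, f i j := by
  rw [prod_filter, Fintype.prod_prod_type]
  simp_rw [← prod_filter, filter_lt_eq_Ioi]

theorem prod_erase_eq_prod_Ioi_mul_prod_Ioi [LocallyFiniteOrderBot ι] (f : ι → ι → M) :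
    ∏ k, ∏ m ∈ univ.erase k, f k m = (∏ i, ∏ j ∈ Ioi i, f i j) * ∏ i, ∏ j ∈ Ioi i, f j i := by
  have hsplit (k : ι) :
      ∏ m ∈ univ.erase k, f k m = (∏ m ∈ Ioi k, f k m) * ∏ m ∈ Iio k, f k m := by
    rw [← compl_singleton, ← Ioi_disjUnion_Iio, prod_disjUnion]
  have hIio : ∏ k, ∏ m ∈ Iio k, f k m = ∏ i, ∏ j ∈ Ioi i, f j i :=
    prod_comm' fun k m => by simp
  simp_rw [hsplit, prod_mul_distrib, hIio]

end PairProducts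

theorem Fin.prod_Ioi_add {M : Type*} [CommMonoid M] {m n : ℕ}
    (f : Fin (m + n) → Fin (m + n) → M) :
    ∏ i, ∏ j ∈ Ioi i, f i j =
      (∏ i, ∏ j ∈ Ioi i, f (castAdd n i) (castAdd n j)) *
        (∏ i, ∏ j ∈ Ioi i, f (natAdd m i) (natAdd m j)) *
        ∏ i, ∏ j, f (castAdd n i) (natAdd m j) := by
  have hcc (i j : Fin m) : castAdd n i < castAdd n j ↔ i < j := Iff.rfl
  have hcn (i : Fin m) (j : Fin n) : castAdd n i < natAdd m j := by
    rw [lt_def, val_castAdd, val_natAdd]; omega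
  have hnc (i : Fin n) (j : Fin m) : ¬ natAdd m i < castAdd n j := by
    rw [lt_def, val_castAdd, val_natAdd]; omega
  simp only [← filter_lt_eq_Ioi, prod_filter, prod_univ_add, hcc, hcn, hnc,
    natAdd_lt_natAdd_iff, ite_true, ite_false, prod_const_one, mul_one, prod_mul_distrib]
  ac_rfl

theorem Matrix.det_vandermonde_append {R : Type*} [CommRing R] {m n : ℕ} (a : Fin m → R)
    (b : Fin n → R) :
    (vandermonde (Fin.append a b)).det =
      (vandermonde a).det * (vandermonde b).det * ∏ i, ∏ j, (b j - a i) := by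
  simp only [det_vandermonde, Fin.prod_Ioi_add, Fin.append_left, Fin.append_right]

section Dtilde

variable {R : Type*} [CommRing R] {L : ℕ}

/-- The columns of `D̃` as polynomials in `ς(λ)`: with `a = ς(x + η/2)` and `b = ς(x - η/2)`
they are `X_k⁽⁺⁾ X_k⁽⁻⁾` and `X⁽⁺⁾ X_k⁽⁻⁾`. -/
noncomputable def dtildeColumn (a b : Fin L → R) : Fin (L + L) → R[X] :=
  Fin.append (fun k => (∏ m ∈ univ.erase k, (X - C (a m))) * ∏ m ∈ univ.erase k, (X - C (b m)))
    (fun k => (∏ m, (X - C (a m))) * ∏ m ∈ univ.erase k, (X - C (b m)))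

theorem natDegree_dtildeColumn_lt (a b : Fin L → R) (k : Fin (L + L)) :
    (dtildeColumn a b k).natDegree < L + L := by
  have hdeg (c : Fin L → R) (s : Finset (Fin L)) : (∏ m ∈ s, (X - C (c m))).natDegree ≤ #s :=
    (natDegree_prod_le _ _).trans <| (sum_le_sum fun m _ => natDegree_X_sub_C_le (c m)).trans
      (by simp)
  induction k using Fin.addCases with
  | left k | right k =>
    simp only [dtildeColumn, Fin.append_left, Fin.append_right]
    refine (natDegree_mul_le.trans (add_le_add (hdeg a _) (hdeg b _))).trans_lt ?_
    have := k.pos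
    simp only [card_erase_of_mem (mem_univ k), card_univ, Fintype.card_fin]
    omega

theorem eval_dtildeColumn_castAdd (a b : Fin L → R) (k : Fin L) (r : R) :
    (dtildeColumn a b (Fin.castAdd L k)).eval r =
      (∏ m ∈ univ.erase k, (r - a m)) * ∏ m ∈ univ.erase k, (r - b m) := by
  simp [dtildeColumn, eval_prod]

theorem eval_dtildeColumn_natAdd (a b : Fin L → R) (k : Fin L) (r : R) :
    (dtildeColumn a b (Fin.natAdd L k)).eval r =
      (∏ m, (r - a m)) * ∏ m ∈ univ.erase k, (r - b m) := by
  rw [dtildeColumn, Fin.append_right]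
  simp [eval_prod]

theorem isLowerTriangular_eval_dtildeColumn (a b : Fin L → R) :
    (Matrix.of fun i k => (dtildeColumn a b k).eval (Fin.append a b i)).IsLowerTriangular := by
  intro i k hik
  rw [OrderDual.toDual_lt_toDual] at hik
  have hself (c : Fin L → R) {m : Fin L} {s : Finset (Fin L)} (hm : m ∈ s) :
      ∏ l ∈ s, (c m - c l) = 0 :=
    prod_eq_zero hm (sub_self _)
  induction i using Fin.addCases with
  | left i =>
    induction k using Fin.addCases with
    | left k =>
      rw [Matrix.of_apply, eval_dtildeColumn_castAdd, Fin.append_left,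
        hself a (mem_erase.2 ⟨(show i < k from hik).ne, mem_univ i⟩), zero_mul]
    | right k =>
      rw [Matrix.of_apply, eval_dtildeColumn_natAdd, Fin.append_left, hself a (mem_univ i),
        zero_mul]
  | right i =>
    induction k using Fin.addCases with
    | left k => rw [Fin.lt_def, Fin.val_natAdd, Fin.val_castAdd] at hik; omega
    | right k =>
      rw [Matrix.of_apply, eval_dtildeColumn_natAdd, Fin.append_right,
        hself b (mem_erase.2 ⟨((Fin.natAdd_lt_natAdd_iff L).1 hik).ne, mem_univ i⟩), mul_zero]

theorem det_coeffMatrix_dtildeColumn_of_injective [IsDomain R] (a b : Fin L → R)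
    (h : Function.Injective (Fin.append a b)) :
    (coeffMatrix (dtildeColumn a b)).det =
      (∏ i, ∏ j ∈ Ioi i, (a i - a j)) * (∏ i, ∏ j ∈ Ioi i, (b i - b j)) *
        ∏ k, ∏ m ∈ univ.erase k, (a k - b m) := by
  refine mul_left_cancel₀ (Matrix.det_vandermonde_ne_zero_iff.2 h) ?_
  rw [← Matrix.det_mul, vandermonde_mul_coeffMatrix _ _ (natDegree_dtildeColumn_lt a b),
    Matrix.det_of_isLowerTriangular _ (isLowerTriangular_eval_dtildeColumn a b),
    Fin.prod_univ_add, Matrix.det_vandermonde_append, Matrix.det_vandermonde,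
    Matrix.det_vandermonde]
  simp only [Matrix.of_apply, eval_dtildeColumn_castAdd, eval_dtildeColumn_natAdd,
    Fin.append_left, Fin.append_right]
  rw [prod_mul_distrib, prod_mul_distrib,
    prod_erase_eq_prod_Ioi_mul_prod_Ioi (fun k m => a k - a m),
    prod_erase_eq_prod_Ioi_mul_prod_Ioi (fun k m => b k - b m),
    prod_comm (f := fun k m => b k - a m)]
  ring

theorem dtildeColumn_map {S : Type*} [CommRing S] (φ : R →+* S) (a b : Fin L → R) :
    (fun k => (dtildeColumn a b k).map φ) = dtildeColumn (φ ∘ a) (φ ∘ b) := by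
  ext1 k
  induction k using Fin.addCases <;>
    simp only [dtildeColumn, Fin.append_left, Fin.append_right, Polynomial.map_mul,
      Polynomial.map_prod, Polynomial.map_sub, map_X, map_C, Function.comp_apply]

theorem det_coeffMatrix_dtildeColumn (a b : Fin L → R) :
    (coeffMatrix (dtildeColumn a b)).det =
      (∏ i, ∏ j ∈ Ioi i, (a i - a j)) * (∏ i, ∏ j ∈ Ioi i, (b i - b j)) *
        ∏ k, ∏ m ∈ univ.erase k, (a k - b m) := by
  let A : Fin L → MvPolynomial (Fin (L + L)) ℤ := fun m => MvPolynomial.X (Fin.castAdd L m)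
  let B : Fin L → MvPolynomial (Fin (L + L)) ℤ := fun m => MvPolynomial.X (Fin.natAdd L m)
  have hAB : Fin.append A B = MvPolynomial.X := Fin.append_castAdd_natAdd
  have huniv := det_coeffMatrix_dtildeColumn_of_injective A B (hAB ▸ MvPolynomial.X_injective)
  let φ := MvPolynomial.eval₂Hom (Int.castRingHom R) (Fin.append a b)
  have hφA (m : Fin L) : φ (A m) = a m := by
    simp only [φ, A, MvPolynomial.eval₂Hom_X', Fin.append_left]
  have hφB (m : Fin L) : φ (B m) = b m := by
    simp only [φ, B, MvPolynomial.eval₂Hom_X', Fin.append_right]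
  have := congrArg φ huniv
  rw [RingHom.map_det, RingHom.mapMatrix_apply, coeffMatrix_map, dtildeColumn_map,
    show φ ∘ A = a from funext hφA, show φ ∘ B = b from funext hφB] at this
  simpa only [map_mul, map_prod, map_sub, hφA, hφB] using this

end Dtilde

theorem ς_surjective : Function.Surjective ς := by
  intro c
  obtain ⟨w, hw⟩ := Complex.cos_surjective (2 * c)
  refine ⟨w * I / 2, ?_⟩
  rw [ς, mul_div_cancel₀ _ two_ne_zero, cosh_mul_I, hw, mul_div_cancel_left₀ _ two_ne_zero]

theorem ς_sub_ς_s15 (z w : ℂ) : ς z - ς w = sinh z ^ 2 - sinh w ^ 2 := by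
  simp only [ς, cosh_two_mul, cosh_sq]
  ring

/-- Determinant of the auxiliary `2L×2L` coefficient matrix `D̃` defined by the
ς-polynomial expansions
`X_k⁽⁺⁾(λ) X_k⁽⁻⁾(λ) = Σ_j D̃_{j,k} ς(λ)^{j−1}` (for the first `L` columns) and
`X⁽⁺⁾(λ) X_k⁽⁻⁾(λ) = Σ_j D̃_{j,L+k} ς(λ)^{j−1}` (for the last `L` columns), where
`X⁽^±⁾(λ) = ∏_ℓ (ς(λ) − ς(x_ℓ ± η/2))` and `X_k⁽^±⁾` omits the factor `ℓ = k`: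
`det D̃ = V̂(x_L+η/2,…,x_1+η/2) · V̂(x_L−η/2,…,x_1−η/2) · ∏_k X_k⁽⁻⁾(x_k+η/2)`. -/
theorem det_auxiliary_Dtilde (L : ℕ) (x : Fin L → ℂ) (η : ℂ)
    (D : Matrix (Fin (L + L)) (Fin (L + L)) ℂ)
    (hD1 : ∀ k : Fin L, ∀ lam : ℂ,
      (∏ m ∈ Finset.univ.erase k, (ς lam - ς (x m + η / 2))) *
        (∏ m ∈ Finset.univ.erase k, (ς lam - ς (x m - η / 2))) =
      ∑ j, D j (Fin.castAdd L k) * ς lam ^ (j : ℕ))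
    (hD2 : ∀ k : Fin L, ∀ lam : ℂ,
      (∏ m, (ς lam - ς (x m + η / 2))) *
        (∏ m ∈ Finset.univ.erase k, (ς lam - ς (x m - η / 2))) =
      ∑ j, D j (Fin.natAdd L k) * ς lam ^ (j : ℕ)) :
    D.det =
      (∏ p ∈ Finset.univ.filter (fun p : Fin L × Fin L => p.1 < p.2),
          (Complex.sinh (x p.1 + η / 2) ^ 2 - Complex.sinh (x p.2 + η / 2) ^ 2)) *
        (∏ p ∈ Finset.univ.filter (fun p : Fin L × Fin L => p.1 < p.2),
          (Complex.sinh (x p.1 - η / 2) ^ 2 - Complex.sinh (x p.2 - η / 2) ^ 2)) *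
        ∏ k, ∏ m ∈ Finset.univ.erase k, (ς (x k + η / 2) - ς (x m - η / 2)) := by
  let a : Fin L → ℂ := fun m => ς (x m + η / 2)
  let b : Fin L → ℂ := fun m => ς (x m - η / 2)
  have hD : D = coeffMatrix (dtildeColumn a b) := by
    refine eq_coeffMatrix_of_forall_eval fun k r => ?_
    obtain ⟨lam, rfl⟩ := ς_surjective r
    induction k using Fin.addCases with
    | left k => exact (eval_dtildeColumn_castAdd a b k _).trans (hD1 k lam)
    | right k => exact (eval_dtildeColumn_natAdd a b k _).trans (hD2 k lam)
  simp only [hD, det_coeffMatrix_dtildeColumn, ← prod_filter_lt_eq_prod_Ioi, ς_sub_ς_s15, a, b]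
end
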